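/- arXiv:1304.4776 — 2 statements merged into one kernel-verified Lean document; each statement's English description precedes it below -/
import Mathlib

section
/- Let (x, B) be a cluster seed with y-variables y_j = ∏_k x_k^{b_{kj}}, let (x̃, B̃) = μ_k(x, B), and set ỹ_j = ∏_i x̃_i^{b̃_{ij}}. Then ỹ_k = y_k^{-1}; for i ≠ k with b_{ki} ≥ 0, ỹ_i = y_i (1 + y_k^{-1})^{-b_{ki}}; and for i ≠ k with b_{ki} ≤ 0, ỹ_i = y_i (1 + y_k)^{-b_{ki}}. -/
open Finset

/-- A cluster seed: an `N`-tuple of cluster variables in a field `F`, together with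
an `N × N` integer exchange matrix. -/
abbrev Seed (F : Type*) (N : ℕ) : Type _ := (Fin N → F) × Matrix (Fin N) (Fin N) ℤ

variable {F : Type*} [Field F] {N : ℕ}

/-- Mutation of the cluster variables in direction `k`:
`x̃_k = (∏_{j : b_{jk} > 0} x_j^{b_{jk}} + ∏_{j : b_{jk} < 0} x_j^{-b_{jk}}) / x_k`,
and `x̃_i = x_i` for `i ≠ k`. -/
noncomputable def mutateX (s : Seed F N) (k : Fin N) : Fin N → F := fun i =>
  if i = k then
    ((∏ j, s.1 j ^ (s.2 j k).toNat) + ∏ j, s.1 j ^ (-s.2 j k).toNat) / s.1 k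
  else s.1 i

/-- Mutation of the exchange matrix in direction `k`. -/
def mutateB (B : Matrix (Fin N) (Fin N) ℤ) (k : Fin N) : Matrix (Fin N) (Fin N) ℤ :=
  Matrix.of fun i j =>
    if i = k ∨ j = k then -B i j
    else B i j + ((B i k).natAbs * B k j + B i k * (B k j).natAbs) / 2

/-- Mutation `μ_k` of a seed in direction `k`. -/
noncomputable def mutate (s : Seed F N) (k : Fin N) : Seed F N :=
  (mutateX s k, mutateB s.2 k)

/-- The operation `s_{i,j}` transposing the `i`-th and `j`-th entries of the cluster
variable tuple and simultaneously the `i`-th and `j`-th rows and columns of the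
exchange matrix. -/
def swapSeed (i j : Fin N) (s : Seed F N) : Seed F N :=
  (s.1 ∘ Equiv.swap i j, Matrix.of fun a b => s.2 (Equiv.swap i j a) (Equiv.swap i j b))

/-- The `y`-variables of a seed: `y_j = ∏_k x_k^{b_{kj}}`. -/
noncomputable def yvar (s : Seed F N) : Fin N → F := fun j => ∏ k, s.1 k ^ (s.2 k j)

/-!
Write `P = ∏ x_j^{[b_{jk}]_+}` and `M = ∏ x_j^{[-b_{jk}]_+}`, so that `y_k = P / M` and
`x̃_k = (P + M) / x_k`. Column `k` of `B̃` is that of `-B`, and since `b_{kk} = 0` the new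
variable `x̃_k` does not enter `ỹ_k`, which is therefore `y_k⁻¹`. For `i ≠ k`, off row `k`
the mutation rule reads `b̃_{li} = b_{li} + b_{ki} [± b_{lk}]_+`, the sign being that of
`b_{ki}`; this gives `ỹ_i = y_i ((P + M) / Q)^{-b_{ki}}` with `Q = P` or `Q = M`, and
`(P + M) / P = 1 + y_k⁻¹`, `(P + M) / M = 1 + y_k`.
-/

theorem Int.natAbs_mul_add_mul_natAbs_div_two_of_nonneg (b c : ℤ) (hc : 0 ≤ c) :
    ((b.natAbs : ℤ) * c + b * c.natAbs) / 2 = c * b.toNat := by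
  rcases le_total 0 b with hb | hb
  · simp only [Int.natCast_natAbs, abs_of_nonneg hb, abs_of_nonneg hc, Int.toNat_of_nonneg hb]
    rw [show b * c + b * c = 2 * (c * b) by ring, Int.mul_ediv_cancel_left _ two_ne_zero]
  · simp [abs_of_nonpos hb, abs_of_nonneg hc, Int.toNat_of_nonpos hb]

theorem Int.natAbs_mul_add_mul_natAbs_div_two_of_nonpos (b c : ℤ) (hc : c ≤ 0) :
    ((b.natAbs : ℤ) * c + b * c.natAbs) / 2 = c * (-b).toNat := by
  rcases le_total 0 b with hb | hb
  · simp [abs_of_nonneg hb, abs_of_nonpos hc, Int.toNat_of_nonpos (neg_nonpos.2 hb)]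
  · simp only [Int.natCast_natAbs, abs_of_nonpos hb, abs_of_nonpos hc,
      Int.toNat_of_nonneg (neg_nonneg.2 hb)]
    rw [show -b * c + b * -c = 2 * (c * -b) by ring, Int.mul_ediv_cancel_left _ two_ne_zero]

section Mutation

variable {x : Fin N → F} {B : Matrix (Fin N) (Fin N) ℤ} {k i l : Fin N}

theorem mutateB_apply_left_self : mutateB B k k i = -B k i := by
  simp [mutateB]

theorem mutateB_apply_right_self : mutateB B k l k = -B l k := by
  simp [mutateB]

theorem mutateB_apply_of_ne (hl : l ≠ k) (hi : i ≠ k) :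
    mutateB B k l i = B l i + ((B l k).natAbs * B k i + B l k * (B k i).natAbs) / 2 := by
  simp [mutateB, hl, hi]

theorem mutateB_apply_of_nonneg (hl : l ≠ k) (hi : i ≠ k) (h : 0 ≤ B k i) :
    mutateB B k l i = B l i + B k i * (B l k).toNat := by
  rw [mutateB_apply_of_ne hl hi, Int.natAbs_mul_add_mul_natAbs_div_two_of_nonneg _ _ h]

theorem mutateB_apply_of_nonpos (hl : l ≠ k) (hi : i ≠ k) (h : B k i ≤ 0) :
    mutateB B k l i = B l i + B k i * (-B l k).toNat := by
  rw [mutateB_apply_of_ne hl hi, Int.natAbs_mul_add_mul_natAbs_div_two_of_nonpos _ _ h]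

theorem mutateX_self :
    mutateX (x, B) k k = ((∏ j, x j ^ (B j k).toNat) + ∏ j, x j ^ (-B j k).toNat) / x k := by
  simp [mutateX]

theorem mutateX_of_ne (hl : l ≠ k) : mutateX (x, B) k l = x l := by
  simp [mutateX, hl]

theorem prod_zpow_eq_div (hx : ∀ j, x j ≠ 0) (e : Fin N → ℤ) :
    ∏ j, x j ^ e j = (∏ j, x j ^ (e j).toNat) / ∏ j, x j ^ (-e j).toNat := by
  rw [← Finset.prod_div_distrib]
  refine Finset.prod_congr rfl fun j _ => ?_
  rw [← zpow_natCast, ← zpow_natCast, ← zpow_sub₀ (hx j), Int.toNat_sub_toNat_neg]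

theorem yvar_eq_div (hx : ∀ j, x j ≠ 0) :
    yvar (x, B) k = (∏ j, x j ^ (B j k).toNat) / ∏ j, x j ^ (-B j k).toNat :=
  prod_zpow_eq_div hx (B · k)

theorem yvar_mutate_self (hB : B k k = 0) :
    yvar (mutate (x, B) k) k = (yvar (x, B) k)⁻¹ := by
  simp only [yvar, mutate, mutateB_apply_right_self, ← Finset.prod_inv_distrib, ← zpow_neg]
  refine Finset.prod_congr rfl fun l _ => ?_
  rcases eq_or_ne l k with rfl | hl
  · simp [hB]
  · rw [mutateX_of_ne hl]

theorem yvar_mutate_of_ne (hx : ∀ j, x j ≠ 0) (hi : i ≠ k) (e : Fin N → ℕ) (he : e k = 0)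
    (hB : ∀ l, l ≠ k → mutateB B k l i = B l i + B k i * e l) :
    yvar (mutate (x, B) k) i = yvar (x, B) i *
      (((∏ j, x j ^ (B j k).toNat) + ∏ j, x j ^ (-B j k).toNat) / ∏ l, x l ^ e l) ^ (-B k i) := by
  set E := (∏ j, x j ^ (B j k).toNat) + ∏ j, x j ^ (-B j k).toNat
  have factor : ∀ l, mutateX (x, B) k l ^ mutateB B k l i
      = x l ^ B l i * (x l ^ e l) ^ B k i * if l = k then E ^ (-B k i) else 1 := by
    intro l
    rcases eq_or_ne l k with rfl | hl
    · rw [mutateX_self, mutateB_apply_left_self, he, div_zpow, zpow_neg (x l), div_inv_eq_mul,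
        if_pos rfl, pow_zero, one_zpow, mul_one, mul_comm]
    · rw [mutateX_of_ne hl, hB l hl, zpow_add₀ (hx l), if_neg hl, ← zpow_natCast, ← zpow_mul,
        mul_comm (e l : ℤ), mul_one]
  simp only [yvar, mutate, factor, Finset.prod_mul_distrib, Finset.prod_zpow, Finset.prod_ite_eq',
    Finset.mem_univ, if_true]
  rw [div_zpow, zpow_neg (∏ l, x l ^ e l), div_inv_eq_mul, mul_comm (E ^ _), mul_assoc]

theorem yvar_mutate_of_nonneg (hx : ∀ j, x j ≠ 0) (hB : B k k = 0) (hi : i ≠ k)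
    (h : 0 ≤ B k i) :
    yvar (mutate (x, B) k) i = yvar (x, B) i * (1 + (yvar (x, B) k)⁻¹) ^ (-B k i) := by
  have hP : (∏ j, x j ^ (B j k).toNat) ≠ 0 :=
    Finset.prod_ne_zero_iff.2 fun j _ => pow_ne_zero _ (hx j)
  rw [yvar_mutate_of_ne hx hi (fun l => (B l k).toNat) (by simp [hB])
      fun l hl => mutateB_apply_of_nonneg hl hi h,
    yvar_eq_div (k := k) hx, inv_div, add_div, div_self hP]

theorem yvar_mutate_of_nonpos (hx : ∀ j, x j ≠ 0) (hB : B k k = 0) (hi : i ≠ k)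
    (h : B k i ≤ 0) :
    yvar (mutate (x, B) k) i = yvar (x, B) i * (1 + yvar (x, B) k) ^ (-B k i) := by
  have hM : (∏ j, x j ^ (-B j k).toNat) ≠ 0 :=
    Finset.prod_ne_zero_iff.2 fun j _ => pow_ne_zero _ (hx j)
  rw [yvar_mutate_of_ne hx hi (fun l => (-B l k).toNat) (by simp [hB])
      fun l hl => mutateB_apply_of_nonpos hl hi h,
    yvar_eq_div (k := k) hx, add_div, div_self hM, add_comm]

end Mutation

/-- Let `(x, B)` be a cluster seed with `y`-variables `y_j = ∏_k x_k^{b_{kj}}`,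
let `(x̃, B̃) = μ_k (x, B)` and `ỹ_j = ∏_i x̃_i^{b̃_{ij}}`.  Then `ỹ_k = y_k⁻¹`;
for `i ≠ k` with `b_{ki} ≥ 0`, `ỹ_i = y_i (1 + y_k⁻¹)^{-b_{ki}}`; and for `i ≠ k` with
`b_{ki} ≤ 0`, `ỹ_i = y_i (1 + y_k)^{-b_{ki}}`. -/
theorem y_variable_mutation {F : Type*} [Field F] {N : ℕ}
    (x : Fin N → F) (hx : AlgebraicIndependent ℤ x)
    (B : Matrix (Fin N) (Fin N) ℤ) (hB : B.transpose = -B) (k : Fin N) :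
    yvar (mutate (x, B) k) k = (yvar (x, B) k)⁻¹ ∧
    (∀ i, i ≠ k → 0 ≤ B k i →
      yvar (mutate (x, B) k) i
        = yvar (x, B) i * (1 + (yvar (x, B) k)⁻¹) ^ (-(B k i))) ∧
    (∀ i, i ≠ k → B k i ≤ 0 →
      yvar (mutate (x, B) k) i
        = yvar (x, B) i * (1 + yvar (x, B) k) ^ (-(B k i))) := by
  have hx0 : ∀ j, x j ≠ 0 := hx.ne_zero
  have hBkk : B k k = 0 := by
    have := congr_fun₂ hB k k
    simp only [Matrix.transpose_apply, Matrix.neg_apply] at this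
    omega
  exact ⟨yvar_mutate_self hBkk, fun i hi h => yvar_mutate_of_nonneg hx0 hBkk hi h,
    fun i hi h => yvar_mutate_of_nonpos hx0 hBkk hi h⟩
end

section
/- On seeds (x, B) with x = (x_1, ..., x_7) and B the 7×7 exchange matrix with rows (0,1,-1,0,0,0,0), (-1,0,0,1,0,0,0), (1,0,0,-1,0,0,0), (0,-1,1,0,1,-1,0), (0,0,0,-1,0,0,1), (0,0,0,1,0,0,-1), (0,0,0,0,-1,1,0), the R-operator admits the alternative expression R = s_{2,5} ∘ s_{3,6} ∘ μ_2 ∘ μ_6 ∘ μ_4 ∘ μ_2 ∘ μ_6; that is, s_{2,5} ∘ s_{3,6} ∘ μ_2 ∘ μ_6 ∘ μ_4 ∘ μ_2 ∘ μ_6 (x, B) = s_{3,5} ∘ s_{2,5} ∘ s_{3,6} ∘ μ_4 ∘ μ_2 ∘ μ_6 ∘ μ_4 (x, B). -/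
open Finset

variable {F : Type*} [Field F] {N : ℕ}

/-- The 7×7 exchange matrix of the paper (indices written 0-based). -/
def B7 : Matrix (Fin 7) (Fin 7) ℤ :=
  !![0, 1, -1, 0, 0, 0, 0;
     -1, 0, 0, 1, 0, 0, 0;
     1, 0, 0, -1, 0, 0, 0;
     0, -1, 1, 0, 1, -1, 0;
     0, 0, 0, -1, 0, 0, 1;
     0, 0, 0, 1, 0, 0, -1;
     0, 0, 0, 0, -1, 1, 0]

/-- The R-operator `R = s_{3,5} ∘ s_{2,5} ∘ s_{3,6} ∘ μ_4 ∘ μ_2 ∘ μ_6 ∘ μ_4`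
(applied right to left; indices here are 0-based, so `μ_4` is `mutate · 3`, etc.). -/
noncomputable def Rop7 (s : Seed F 7) : Seed F 7 :=
  swapSeed 2 4 (swapSeed 1 4 (swapSeed 2 5
    (mutate (mutate (mutate (mutate s 3) 5) 1) 3)))

/-- The inverse R-operator `R⁻¹ = s_{3,6} ∘ s_{2,5} ∘ s_{3,5} ∘ μ_4 ∘ μ_5 ∘ μ_3 ∘ μ_4`
(applied right to left; 0-based indices). -/
noncomputable def Rinv7 (s : Seed F 7) : Seed F 7 :=
  swapSeed 2 5 (swapSeed 1 4 (swapSeed 2 4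
    (mutate (mutate (mutate (mutate s 3) 2) 4) 3)))


/-!
Both sides are computed in closed form (indices 1-based here). With `a = (x₇ + x₄)/x₆` and
`b = (x₁ + x₄)/x₂`, the left-hand sequence creates `c = (x₁x₇ + a b x₃x₅)/x₄`, `(x₁ + c)/a` and
`(x₇ + c)/b`; with `p = (x₂x₆ + x₃x₅)/x₄`, `q = (p x₇ + x₃x₅)/x₆` and `r = (x₁p + x₃x₅)/x₂`, the
right-hand one creates `p, q, r` and `(r q + x₃x₅)/p`. The two tuples then agree through three
rational identities (`c = (r q + x₃x₅)/p`, `(x₁ + c)/a = r`, `(x₇ + c)/b = q`), whose denominators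
cannot vanish because the `xᵢ` are algebraically independent; the exchange matrices agree by
direct evaluation.
-/

theorem AlgebraicIndependent.aeval_ne_zero_of_eval_one_ne_zero {ι R A : Type*} [CommRing R]
    [CommRing A] [Algebra R A] {x : ι → A} (hx : AlgebraicIndependent R x)
    (p : MvPolynomial ι R) (hp : MvPolynomial.eval 1 p ≠ 0) : MvPolynomial.aeval x p ≠ 0 :=
  fun h => hp (by rw [hx.eq_zero_of_aeval_eq_zero p h, map_zero])

lemma mutate_fst (s : Seed F N) (k : Fin N) :
    (mutate s k).1 = Function.update s.1 k
      ((∏ j, s.1 j ^ (s.2 j k).toNat + ∏ j, s.1 j ^ (-s.2 j k).toNat) / s.1 k) := by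
  funext i
  by_cases h : i = k
  · subst h
    simp [mutate, mutateX]
  · simp [mutate, mutateX, h]

lemma mutate_snd (s : Seed F N) (k : Fin N) : (mutate s k).2 = mutateB s.2 k := rfl

lemma fst_mutate_B7_5_1_3_5_1 (x : Fin 7 → F) :
    (mutate (mutate (mutate (mutate (mutate (x, B7) 5) 1) 3) 5) 1).1 =
      let a := (x 6 + x 3) / x 5
      let b := (x 0 + x 3) / x 1
      let c := (x 0 * x 6 + b * x 2 * x 4 * a) / x 3
      ![x 0, (x 6 + c) / b, x 2, c, x 4, (x 0 + c) / a, x 6] := by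
  simp only [mutate_fst, mutate_snd]
  funext i
  fin_cases i <;> simp [Fin.prod_univ_seven, Function.update, mutateB, B7]

lemma fst_mutate_B7_3_5_1_3 (x : Fin 7 → F) :
    (mutate (mutate (mutate (mutate (x, B7) 3) 5) 1) 3).1 =
      let p := (x 1 * x 5 + x 2 * x 4) / x 3
      let q := (p * x 6 + x 2 * x 4) / x 5
      let r := (x 0 * p + x 2 * x 4) / x 1
      ![x 0, r, x 2, (r * q + x 2 * x 4) / p, x 4, q, x 6] := by
  simp only [mutate_fst, mutate_snd]
  funext i
  fin_cases i <;> simp [Fin.prod_univ_seven, Function.update, mutateB, B7]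

lemma snd_swap_mutate_B7_eq_snd_Rop7 (x : Fin 7 → F) :
    (swapSeed 1 4 (swapSeed 2 5
        (mutate (mutate (mutate (mutate (mutate (x, B7) 5) 1) 3) 5) 1))).2
      = (Rop7 (x, B7)).2 := by
  simp only [Rop7, swapSeed, mutate_snd]
  decide

lemma fst_swap_mutate_B7_eq_fst_Rop7 (x : Fin 7 → F) (h1 : x 1 ≠ 0) (h3 : x 3 ≠ 0)
    (h5 : x 5 ≠ 0) (h03 : x 0 + x 3 ≠ 0) (h63 : x 6 + x 3 ≠ 0)
    (h1524 : x 1 * x 5 + x 2 * x 4 ≠ 0) :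
    (swapSeed 1 4 (swapSeed 2 5
        (mutate (mutate (mutate (mutate (mutate (x, B7) 5) 1) 3) 5) 1))).1
      = (Rop7 (x, B7)).1 := by
  simp only [Rop7, swapSeed, fst_mutate_B7_5_1_3_5_1, fst_mutate_B7_3_5_1_3]
  set a := (x 6 + x 3) / x 5 with ha
  set b := (x 0 + x 3) / x 1 with hb
  set c := (x 0 * x 6 + b * x 2 * x 4 * a) / x 3 with hc
  set p := (x 1 * x 5 + x 2 * x 4) / x 3 with hp
  set q := (p * x 6 + x 2 * x 4) / x 5 with hq
  set r := (x 0 * p + x 2 * x 4) / x 1 with hr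
  have hc_eq : c = (r * q + x 2 * x 4) / p := by
    rw [hc, hb, ha, hr, hq, hp]
    field_simp
    ring
  have hr_eq : (x 0 + c) / a = r := by
    rw [hc, hb, ha, hr, hp]
    field_simp
    ring
  have hq_eq : (x 6 + c) / b = q := by
    rw [hc, hb, ha, hq, hp]
    field_simp
    ring
  rw [hr_eq, hq_eq, hc_eq]
  funext i
  fin_cases i <;> rfl

/-- In 0-based indices `μ_2, μ_4, μ_6` are `mutate · 1`, `mutate · 3`, `mutate · 5`, and
`s_{2,5}, s_{3,6}` are `swapSeed 1 4`, `swapSeed 2 5`. -/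
theorem R_alternative_expression {F : Type*} [Field F]
    (x : Fin 7 → F) (hx : AlgebraicIndependent ℤ x) :
    swapSeed 1 4 (swapSeed 2 5
        (mutate (mutate (mutate (mutate (mutate (x, B7) 5) 1) 3) 5) 1))
      = Rop7 (x, B7) := by
  have h03 : x 0 + x 3 ≠ 0 := by
    simpa using hx.aeval_ne_zero_of_eval_one_ne_zero (.X 0 + .X 3) (by simp)
  have h63 : x 6 + x 3 ≠ 0 := by
    simpa using hx.aeval_ne_zero_of_eval_one_ne_zero (.X 6 + .X 3) (by simp)
  have h1524 : x 1 * x 5 + x 2 * x 4 ≠ 0 := by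
    simpa using hx.aeval_ne_zero_of_eval_one_ne_zero (.X 1 * .X 5 + .X 2 * .X 4) (by simp)
  exact Prod.ext
    (fst_swap_mutate_B7_eq_fst_Rop7 x (hx.ne_zero 1) (hx.ne_zero 3) (hx.ne_zero 5) h03 h63 h1524)
    (snd_swap_mutate_B7_eq_snd_Rop7 x)
end
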